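/- arXiv:2002.07978 — 3 statements merged into one kernel-verified Lean document; each statement's English description precedes it below -/
import Mathlib

section
/- Let σ < 0 < τ be real numbers, a, b ∈ ℝ³, and let X̂ : ℝ → ℝ³ be a bounded measurable map with X̂ = a almost everywhere on (σ,0) and X̂ = b almost everywhere on (0,τ). Set W = X̂ · 1_{ℝ∖(σ,τ)} (i.e., W equals X̂ outside (σ,τ) and 0 on (σ,τ)). Then for every ζ in the upper half plane, the componentwise Poisson integral satisfies P_{X̂}(ζ) = a + b + ((a−b)/π)·Arg(ζ) + (b/π)·Arg(τ−ζ) − (a/π)·Arg⁺(σ−ζ) + P_W(ζ). -/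
/-!
For `ζ` in the upper half plane, the Poisson kernel `s ↦ η / ((ξ - s)² + η²)` is the derivative
of `s ↦ arg (s - ζ)`, so its integral over `(c, d)` is `arg (d - ζ) - arg (c - ζ)`. Almost
everywhere, `X` is the sum of `a` on `(σ, 0)`, `b` on `(0, τ)` and `W`; adding the three Poisson
integrals and using `arg (-ζ) = arg ζ - π` and `Arg⁺ (σ - ζ) = arg (σ - ζ) + 2π` gives the formula.
-/

/-- The Poisson integral for the upper half plane. -/
noncomputable def poisson (U : ℝ → ℝ) (ζ : ℂ) : ℝ :=
  (1 / Real.pi) * ∫ s : ℝ, (ζ.im / ((ζ.re - s) ^ 2 + ζ.im ^ 2)) * U s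

/-- `Arg⁺`: the branch of the argument taking values in `(0, 2π)`,
defined on `ℂ \ [0, ∞)`. -/
noncomputable def argPlus (w : ℂ) : ℝ :=
  if 0 < Complex.arg w then Complex.arg w else Complex.arg w + 2 * Real.pi

open MeasureTheory Set Real

theorem Complex.arg_eq_pi_div_two_sub_arctan {z : ℂ} (hz : 0 < z.im) :
    arg z = π / 2 - Real.arctan (z.re / z.im) := by
  have h_pos : 0 < arg z := by
    rcases (arg_nonneg_iff.mpr hz.le).lt_or_eq with h | h
    · exact h
    · exact absurd (arg_eq_zero_iff.mp h.symm).2 hz.ne'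
  have h_lt : arg z < π := arg_lt_pi_iff.mpr (Or.inr hz.ne')
  rw [← inv_div z.im, ← tan_arg, ← Real.tan_pi_div_two_sub,
    Real.arctan_tan (by linarith) (by linarith)]
  ring

theorem Complex.arg_ofReal_sub {ζ : ℂ} (hζ : 0 < ζ.im) (s : ℝ) :
    arg (s - ζ) = Real.arctan ((s - ζ.re) / ζ.im) - π / 2 := by
  have h : ((s : ℂ) - ζ) = -(ζ - s) := by ring
  have him : 0 < (ζ - s).im := by simpa using hζ
  have hre : (s - ζ.re) / ζ.im = -((ζ - s).re / (ζ - s).im) := by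
    simp only [sub_re, ofReal_re, sub_im, ofReal_im, sub_zero]
    ring
  rw [h, arg_neg_eq_arg_sub_pi_of_im_pos him, arg_eq_pi_div_two_sub_arctan him, hre,
    Real.arctan_neg]
  ring

noncomputable def halfPlanePoissonKernel (ζ : ℂ) (s : ℝ) : ℝ :=
  ζ.im / ((ζ.re - s) ^ 2 + ζ.im ^ 2)

theorem hasDerivAt_arg_ofReal_sub {ζ : ℂ} (hζ : 0 < ζ.im) (s : ℝ) :
    HasDerivAt (fun t : ℝ => Complex.arg (t - ζ)) (halfPlanePoissonKernel ζ s) s := by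
  rw [funext (Complex.arg_ofReal_sub hζ)]
  have h := ((((hasDerivAt_id s).sub_const ζ.re).div_const ζ.im).arctan).sub_const (π / 2)
  refine h.congr_deriv ?_
  rw [halfPlanePoissonKernel, id]
  field_simp
  ring

theorem integrable_halfPlanePoissonKernel {ζ : ℂ} (hζ : 0 < ζ.im) :
    Integrable (halfPlanePoissonKernel ζ) := by
  have h : Integrable fun s : ℝ => (1 + ((s - ζ.re) / ζ.im) ^ 2)⁻¹ :=
    (integrable_inv_one_add_sq.comp_div hζ.ne').comp_sub_right ζ.re
  refine (h.const_mul ζ.im⁻¹).congr (.of_forall fun s => ?_)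
  simp only [halfPlanePoissonKernel]
  field_simp
  ring

theorem intervalIntegral_halfPlanePoissonKernel {ζ : ℂ} (hζ : 0 < ζ.im) (c d : ℝ) :
    ∫ s in c..d, halfPlanePoissonKernel ζ s = Complex.arg (d - ζ) - Complex.arg (c - ζ) :=
  intervalIntegral.integral_eq_sub_of_hasDerivAt (fun s _ => hasDerivAt_arg_ofReal_sub hζ s)
    (integrable_halfPlanePoissonKernel hζ).intervalIntegrable

theorem poisson_eq_integral_halfPlanePoissonKernel_mul (U : ℝ → ℝ) (ζ : ℂ) :
    poisson U ζ = 1 / π * ∫ s, halfPlanePoissonKernel ζ s * U s :=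
  rfl

theorem integrable_halfPlanePoissonKernel_mul {ζ : ℂ} (hζ : 0 < ζ.im) {U : ℝ → ℝ}
    (hU : AEStronglyMeasurable U) {C : ℝ} (hC : ∀ᵐ s, ‖U s‖ ≤ C) :
    Integrable fun s => halfPlanePoissonKernel ζ s * U s :=
  (integrable_halfPlanePoissonKernel hζ).mul_bdd hU hC

theorem poisson_congr_ae {U V : ℝ → ℝ} (h : U =ᵐ[volume] V) (ζ : ℂ) :
    poisson U ζ = poisson V ζ := by
  rw [poisson_eq_integral_halfPlanePoissonKernel_mul,
    poisson_eq_integral_halfPlanePoissonKernel_mul,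
    integral_congr_ae (h.mono fun s hs => by rw [hs])]

theorem MeasureTheory.Integrable.halfPlanePoissonKernel_mul_add {ζ : ℂ} {U V : ℝ → ℝ}
    (hU : Integrable fun s => halfPlanePoissonKernel ζ s * U s)
    (hV : Integrable fun s => halfPlanePoissonKernel ζ s * V s) :
    Integrable fun s => halfPlanePoissonKernel ζ s * (U + V) s :=
  (hU.add hV).congr (.of_forall fun _ => (mul_add _ _ _).symm)

theorem poisson_add {ζ : ℂ} {U V : ℝ → ℝ}
    (hU : Integrable fun s => halfPlanePoissonKernel ζ s * U s)
    (hV : Integrable fun s => halfPlanePoissonKernel ζ s * V s) :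
    poisson (U + V) ζ = poisson U ζ + poisson V ζ := by
  simp only [poisson_eq_integral_halfPlanePoissonKernel_mul, Pi.add_apply, mul_add,
    integral_add hU hV]

theorem poisson_indicator_Ioo_const {ζ : ℂ} (hζ : 0 < ζ.im) {c d : ℝ} (hcd : c ≤ d) (v : ℝ) :
    poisson ((Ioo c d).indicator fun _ => v) ζ
      = v * (Complex.arg (d - ζ) - Complex.arg (c - ζ)) / π := by
  simp only [poisson_eq_integral_halfPlanePoissonKernel_mul, ← indicator_mul_right,
    integral_indicator measurableSet_Ioo, integral_mul_const, ← integral_Ioc_eq_integral_Ioo,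
    ← intervalIntegral.integral_of_le hcd, intervalIntegral_halfPlanePoissonKernel hζ]
  ring

theorem ae_eq_indicator_add_indicator_add_indicator_compl {E : Type*} [AddMonoid E]
    {μ : Measure ℝ} [NullSingletonClass μ] {σ τ : ℝ} (hσ : σ ≤ 0) (hτ : 0 ≤ τ)
    {f : ℝ → E} {a b : E}
    (ha : ∀ᵐ s ∂μ.restrict (Ioo σ 0), f s = a) (hb : ∀ᵐ s ∂μ.restrict (Ioo 0 τ), f s = b) :
    f =ᵐ[μ] (Ioo σ 0).indicator (fun _ => a) + (Ioo 0 τ).indicator (fun _ => b)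
      + (Ioo σ τ)ᶜ.indicator f := by
  filter_upwards [(ae_restrict_iff' measurableSet_Ioo).mp ha,
    (ae_restrict_iff' measurableSet_Ioo).mp hb, μ.ae_ne 0] with s hsa hsb hs0
  simp only [Pi.add_apply, indicator_apply, mem_Ioo, mem_compl_iff]
  split_ifs <;> grind

theorem argPlus_eq_arg_add_two_pi {w : ℂ} (hw : w.im < 0) : argPlus w = Complex.arg w + 2 * π :=
  if_neg (not_lt.mpr (Complex.arg_neg_iff.mpr hw).le)

/-- Decomposition of the Poisson integral of boundary data which is constantly `a`
on `(σ, 0)` and constantly `b` on `(0, τ)`. -/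
theorem poisson_decomposition (σ τ : ℝ) (hσ : σ < 0) (hτ : 0 < τ)
    (a b : Fin 3 → ℝ) (X : ℝ → Fin 3 → ℝ)
    (hXmeas : Measurable X) (hXbdd : ∃ C : ℝ, ∀ s : ℝ, ‖X s‖ ≤ C)
    (hXa : ∀ᵐ s ∂(MeasureTheory.volume.restrict (Set.Ioo σ 0)), X s = a)
    (hXb : ∀ᵐ s ∂(MeasureTheory.volume.restrict (Set.Ioo 0 τ)), X s = b)
    (W : ℝ → Fin 3 → ℝ)
    (hW : ∀ s : ℝ, W s = if s ∈ Set.Ioo σ τ then 0 else X s) :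
    ∀ ζ : ℂ, 0 < ζ.im →
      (fun i => poisson (fun s => X s i) ζ) =
        a + b + (Complex.arg ζ / Real.pi) • (a - b)
          + (Complex.arg ((τ : ℂ) - ζ) / Real.pi) • b
          - (argPlus ((σ : ℂ) - ζ) / Real.pi) • a
          + (fun i => poisson (fun s => W s i) ζ) := by
  intro ζ hζ
  obtain ⟨C, hC⟩ := hXbdd
  funext i
  have hWi : (fun s => W s i) = (Ioo σ τ)ᶜ.indicator fun s => X s i := by
    ext s
    by_cases hs : s ∈ Ioo σ τ <;> simp [hW, hs]
  have hint_const (c d v : ℝ) :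
      Integrable fun s => halfPlanePoissonKernel ζ s * (Ioo c d).indicator (fun _ => v) s :=
    integrable_halfPlanePoissonKernel_mul hζ
      (aestronglyMeasurable_const.indicator measurableSet_Ioo)
      (.of_forall fun s => norm_indicator_le_norm_self (fun _ : ℝ => v) s)
  have hint_W :
      Integrable fun s => halfPlanePoissonKernel ζ s * (Ioo σ τ)ᶜ.indicator (fun s => X s i) s :=
    integrable_halfPlanePoissonKernel_mul hζ
      (((measurable_pi_apply i).comp hXmeas).aestronglyMeasurable.indicator
        measurableSet_Ioo.compl)
      (.of_forall fun s => (norm_indicator_le_norm_self _ s).trans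
        ((norm_le_pi_norm (X s) i).trans (hC s)))
  have hdecomp := ae_eq_indicator_add_indicator_add_indicator_compl hσ.le hτ.le
    (hXa.mono fun s hs => congrFun hs i) (hXb.mono fun s hs => congrFun hs i)
  have hσζ : ((σ : ℂ) - ζ).im < 0 := by simpa using hζ
  simp only [Pi.add_apply, Pi.sub_apply, Pi.smul_apply, smul_eq_mul]
  rw [poisson_congr_ae hdecomp,
    poisson_add ((hint_const _ _ _).halfPlanePoissonKernel_mul_add (hint_const _ _ _)) hint_W,
    poisson_add (hint_const _ _ _) (hint_const _ _ _), poisson_indicator_Ioo_const hζ hσ.le,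
    poisson_indicator_Ioo_const hζ hτ.le, ← hWi, Complex.ofReal_zero, zero_sub,
    Complex.arg_neg_eq_arg_sub_pi_of_im_pos hζ, argPlus_eq_arg_add_two_pi hσζ]
  field_simp
  ring
end

section
/- Define ψ₂ : (0,π) × (0,∞) → ℝ by ψ₂(x,y) = arccos(−cos x / cosh y). Then on (0,π) × (0,∞): (i) ψ₂ is spacelike, i.e. (∂ψ₂/∂x)² + (∂ψ₂/∂y)² < 1; (ii) ψ₂ satisfies the maximal surface equation (1 − ψ_y²)ψ_xx + 2ψ_xψ_yψ_xy + (1 − ψ_x²)ψ_yy = 0; (iii) the graph of ψ₂ lies on 𝒮₂, i.e. cos(ψ₂(x,y))·cosh y + cos x = 0. -/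
/-- Partial derivative in the first variable. -/
noncomputable def px (ψ : ℝ → ℝ → ℝ) (x y : ℝ) : ℝ := deriv (fun x' => ψ x' y) x

/-- Partial derivative in the second variable. -/
noncomputable def py (ψ : ℝ → ℝ → ℝ) (x y : ℝ) : ℝ := deriv (fun y' => ψ x y') y

/-- The graphing function of one sheet of `𝒮₂ = {cos t cosh y + cos x = 0}`. -/
noncomputable def ψ₂ (x y : ℝ) : ℝ := Real.arccos (-Real.cos x / Real.cosh y)

/-! The graph is the level set `cos t cosh y + cos x = 0` solved for `t`. With
`E = sin² x + sinh² y`, the chain rule for `arccos` and `1 - cos² x / cosh² y = E / cosh² y` give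
`ψ_x = -sin x / √E` and `ψ_y = -cos x tanh y / √E`, so `ψ_x² + ψ_y² = 1 / cosh² y`, which is `< 1`
off `y = 0`. Differentiating once more, the maximal surface equation becomes a polynomial identity
modulo `sin² + cos² = 1`, `cosh² = 1 + sinh²` and `(√E)² = E`. -/

open Real

theorem HasDerivAt.arccos {f : ℝ → ℝ} {f' x : ℝ} (hf : HasDerivAt f f' x) (h : f x ^ 2 < 1) :
    HasDerivAt (fun t => arccos (f t)) (-f' / √(1 - f x ^ 2)) x := by
  have h₁ : f x ≠ -1 := by rintro h'; norm_num [h'] at h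
  have h₂ : f x ≠ 1 := by rintro h'; norm_num [h'] at h
  exact ((hasDerivAt_arccos h₁ h₂).comp x hf).congr_deriv (by ring)

theorem HasDerivAt.div_sqrt {f g : ℝ → ℝ} {f' g' x : ℝ} (hf : HasDerivAt f f' x)
    (hg : HasDerivAt g g' x) (hx : 0 < g x) :
    HasDerivAt (fun t => f t / √(g t)) ((f' * g x - f x * g' / 2) / (g x * √(g x))) x := by
  have hs : √(g x) ≠ 0 := (sqrt_pos.2 hx).ne'
  refine (hf.div (hg.sqrt hx.ne') hs).congr_deriv ?_
  field_simp
  rw [sq_sqrt hx.le]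
  ring

section

variable {x y : ℝ}

theorem sin_sq_add_sinh_sq_pos (h : sin x ≠ 0 ∨ y ≠ 0) : 0 < sin x ^ 2 + sinh y ^ 2 := by
  rcases h with h | h
  · positivity
  · have : sinh y ≠ 0 := sinh_ne_zero.2 h
    positivity

theorem one_sub_neg_cos_div_cosh_sq (x y : ℝ) :
    1 - (-cos x / cosh y) ^ 2 = (sin x ^ 2 + sinh y ^ 2) / cosh y ^ 2 := by
  have := cosh_pos y
  field_simp
  linear_combination cosh_sq y - sin_sq_add_cos_sq x

theorem cos_ψ₂_mul_cosh_add_cos (x y : ℝ) : cos (ψ₂ x y) * cosh y + cos x = 0 := by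
  have hc := cosh_pos y
  have hcos : |cos x| ≤ cosh y := (abs_cos_le_one x).trans (one_le_cosh y)
  rw [ψ₂, cos_arccos]
  · field_simp
    ring
  · rw [le_div_iff₀ hc]; linarith [neg_abs_le (cos x), le_abs_self (cos x)]
  · rw [div_le_iff₀ hc]; linarith [neg_abs_le (cos x), le_abs_self (cos x)]

theorem hasDerivAt_arccos_of_eq_neg_cos_div_cosh {f : ℝ → ℝ} {f' t : ℝ}
    (hf : HasDerivAt f f' t) (hft : f t = -cos x / cosh y) (hE : 0 < sin x ^ 2 + sinh y ^ 2) :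
    HasDerivAt (fun s => arccos (f s)) (-f' * cosh y / √(sin x ^ 2 + sinh y ^ 2)) t := by
  have hc := cosh_pos y
  have h1 : 0 < 1 - f t ^ 2 := by
    rw [hft, one_sub_neg_cos_div_cosh_sq]
    positivity
  refine (hf.arccos (by linarith)).congr_deriv ?_
  rw [hft, one_sub_neg_cos_div_cosh_sq, sqrt_div' _ (sq_nonneg _), sqrt_sq hc.le]
  field_simp

theorem hasDerivAt_ψ₂_fst (hE : 0 < sin x ^ 2 + sinh y ^ 2) :
    HasDerivAt (fun x' => ψ₂ x' y) (-sin x / √(sin x ^ 2 + sinh y ^ 2)) x := by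
  refine (hasDerivAt_arccos_of_eq_neg_cos_div_cosh
    ((hasDerivAt_cos x).neg.div_const (cosh y)) rfl hE).congr_deriv ?_
  field_simp [(cosh_pos y).ne']

theorem hasDerivAt_ψ₂_snd (hE : 0 < sin x ^ 2 + sinh y ^ 2) :
    HasDerivAt (fun y' => ψ₂ x y') (-cos x * sinh y / cosh y / √(sin x ^ 2 + sinh y ^ 2)) y := by
  refine (hasDerivAt_arccos_of_eq_neg_cos_div_cosh
    ((hasDerivAt_const y (-cos x)).div (hasDerivAt_cosh y) (cosh_pos y).ne') rfl hE).congr_deriv ?_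
  field_simp [(cosh_pos y).ne']
  ring

theorem px_ψ₂ (hE : 0 < sin x ^ 2 + sinh y ^ 2) :
    px ψ₂ x y = -sin x / √(sin x ^ 2 + sinh y ^ 2) :=
  (hasDerivAt_ψ₂_fst hE).deriv

theorem py_ψ₂ (hE : 0 < sin x ^ 2 + sinh y ^ 2) :
    py ψ₂ x y = -cos x * sinh y / cosh y / √(sin x ^ 2 + sinh y ^ 2) :=
  (hasDerivAt_ψ₂_snd hE).deriv

theorem px_px_ψ₂ (hy : y ≠ 0) :
    px (px ψ₂) x y = -cos x * sinh y ^ 2 /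
      ((sin x ^ 2 + sinh y ^ 2) * √(sin x ^ 2 + sinh y ^ 2)) := by
  have hE := sin_sq_add_sinh_sq_pos (x := x) (.inr hy)
  have hpx : (fun x' => px ψ₂ x' y) = fun x' => -sin x' / √(sin x' ^ 2 + sinh y ^ 2) :=
    funext fun x' => px_ψ₂ (sin_sq_add_sinh_sq_pos (.inr hy))
  have hsin : HasDerivAt (fun x' => -sin x') (-cos x) x := (hasDerivAt_sin x).neg
  have hE' : HasDerivAt (fun x' => sin x' ^ 2 + sinh y ^ 2) (2 * sin x * cos x) x := by
    simpa using ((hasDerivAt_sin x).pow 2).add_const (sinh y ^ 2)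
  have hd := hsin.div_sqrt hE' hE
  rw [px, hpx]
  refine hd.deriv.trans ?_
  field_simp
  ring

theorem py_px_ψ₂ (hx : sin x ≠ 0) :
    py (px ψ₂) x y = sin x * sinh y * cosh y /
      ((sin x ^ 2 + sinh y ^ 2) * √(sin x ^ 2 + sinh y ^ 2)) := by
  have hE := sin_sq_add_sinh_sq_pos (y := y) (.inl hx)
  have hpx : (fun y' => px ψ₂ x y') = fun y' => -sin x / √(sin x ^ 2 + sinh y' ^ 2) :=
    funext fun y' => px_ψ₂ (sin_sq_add_sinh_sq_pos (.inl hx))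
  have hE' : HasDerivAt (fun y' => sin x ^ 2 + sinh y' ^ 2) (2 * sinh y * cosh y) y := by
    simpa using ((hasDerivAt_sinh y).pow 2).const_add (sin x ^ 2)
  have hd := (hasDerivAt_const y (-sin x)).div_sqrt hE' hE
  rw [py, hpx]
  refine hd.deriv.trans ?_
  field_simp
  ring

theorem py_py_ψ₂ (hx : sin x ≠ 0) :
    py (py ψ₂) x y = -cos x * (sin x ^ 2 - sinh y ^ 4) /
      (cosh y ^ 2 * (sin x ^ 2 + sinh y ^ 2) * √(sin x ^ 2 + sinh y ^ 2)) := by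
  have hpy : (fun y' => py ψ₂ x y') =
      fun y' => -cos x * sinh y' / cosh y' / √(sin x ^ 2 + sinh y' ^ 2) :=
    funext fun y' => py_ψ₂ (sin_sq_add_sinh_sq_pos (.inl hx))
  have hE := sin_sq_add_sinh_sq_pos (y := y) (.inl hx)
  have hE' : HasDerivAt (fun y' => sin x ^ 2 + sinh y' ^ 2) (2 * sinh y * cosh y) y := by
    simpa using ((hasDerivAt_sinh y).pow 2).const_add (sin x ^ 2)
  have htanh : HasDerivAt (fun y' => -cos x * sinh y' / cosh y') (-cos x / cosh y ^ 2) y := by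
    refine (((hasDerivAt_sinh y).const_mul (-cos x)).div (hasDerivAt_cosh y)
      (cosh_pos y).ne').congr_deriv ?_
    field_simp
    linear_combination -cos x * cosh_sq y
  have hd := htanh.div_sqrt hE' hE
  rw [py, hpy]
  refine hd.deriv.trans ?_
  have := cosh_pos y
  field_simp
  linear_combination cos x * sinh y ^ 2 * cosh_sq y

theorem px_ψ₂_sq_add_py_ψ₂_sq (hE : 0 < sin x ^ 2 + sinh y ^ 2) :
    px ψ₂ x y ^ 2 + py ψ₂ x y ^ 2 = 1 / cosh y ^ 2 := by
  have := cosh_pos y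
  rw [px_ψ₂ hE, py_ψ₂ hE, div_pow, div_pow, sq_sqrt hE.le]
  field_simp
  linear_combination sinh y ^ 2 * sin_sq_add_cos_sq x + sin x ^ 2 * cosh_sq y

theorem px_ψ₂_sq_add_py_ψ₂_sq_lt_one (hy : y ≠ 0) : px ψ₂ x y ^ 2 + py ψ₂ x y ^ 2 < 1 := by
  rw [px_ψ₂_sq_add_py_ψ₂_sq (sin_sq_add_sinh_sq_pos (.inr hy)), div_lt_one (by positivity)]
  exact one_lt_pow₀ (one_lt_cosh.2 hy) two_ne_zero

theorem ψ₂_maximal_surface_equation (hx : sin x ≠ 0) (hy : y ≠ 0) :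
    (1 - (py ψ₂ x y) ^ 2) * px (px ψ₂) x y
        + 2 * px ψ₂ x y * py ψ₂ x y * py (px ψ₂) x y
        + (1 - (px ψ₂ x y) ^ 2) * py (py ψ₂) x y = 0 := by
  have hE := sin_sq_add_sinh_sq_pos (x := x) (y := y) (.inl hx)
  have := cosh_pos y
  have hr : √(sin x ^ 2 + sinh y ^ 2) ≠ 0 := (sqrt_pos.2 hE).ne'
  rw [px_ψ₂ hE, py_ψ₂ hE, px_px_ψ₂ hy, py_px_ψ₂ hx, py_py_ψ₂ hx]
  set r := √(sin x ^ 2 + sinh y ^ 2)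
  have hr2 : sin x ^ 2 + sinh y ^ 2 = r ^ 2 := (sq_sqrt hE.le).symm
  rw [hr2]
  field_simp
  linear_combination
    (cos x * sinh y ^ 2 * cosh y ^ 2 - cos x * sinh y ^ 4 + cos x * sin x ^ 2) * hr2
      + (cos x * sinh y ^ 2 * sin x ^ 2 - cos x * sinh y ^ 4) * cosh_sq y
      + cos x * sinh y ^ 4 * sin_sq_add_cos_sq x

end

/-- On `(0, π) × (0, ∞)`, the function `ψ₂` is spacelike, satisfies the maximal
surface equation, and its graph lies on `𝒮₂`. -/
theorem ψ₂_maximal_graph :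
    ∀ x ∈ Set.Ioo (0 : ℝ) Real.pi, ∀ y ∈ Set.Ioi (0 : ℝ),
      (px ψ₂ x y) ^ 2 + (py ψ₂ x y) ^ 2 < 1 ∧
      (1 - (py ψ₂ x y) ^ 2) * px (px ψ₂) x y
        + 2 * px ψ₂ x y * py ψ₂ x y * py (px ψ₂) x y
        + (1 - (px ψ₂ x y) ^ 2) * py (py ψ₂) x y = 0 ∧
      Real.cos (ψ₂ x y) * Real.cosh y + Real.cos x = 0 := by
  rintro x ⟨hx₀, hxπ⟩ y hy
  have hsin : sin x ≠ 0 := (sin_pos_of_pos_of_lt_pi hx₀ hxπ).ne'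
  have hy₀ : y ≠ 0 := (Set.mem_Ioi.1 hy).ne'
  exact ⟨px_ψ₂_sq_add_py_ψ₂_sq_lt_one hy₀, ψ₂_maximal_surface_equation hsin hy₀,
    cos_ψ₂_mul_cosh_add_cos x y⟩
end

section
/- Let α : ℤ → ℝ be a sequence with α(i) > 0 for all i, and let j : ℤ → ℕ be a function with j(i) ≥ 1 for all i, such that for every i ∈ ℤ: (a) α(i) + α(i+1) + ⋯ + α(i + j(i) − 1) = 2π, and (b) α(i + j(i)) = α(i). Then j(i+1) = j(i) for all i ∈ ℤ; in particular j is constant. -/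
/-- Constancy of the valency (Lemma A.1): if `α` is a positive sequence and each
window of length `j(i)` starting at `i` sums to `2π` with `α(i + j(i)) = α(i)`,
then `j` is constant. -/
theorem valency_constant (α : ℤ → ℝ) (hpos : ∀ i : ℤ, 0 < α i)
    (j : ℤ → ℕ) (hj : ∀ i : ℤ, 1 ≤ j i)
    (hwin : ∀ i : ℤ, ∑ k ∈ Finset.range (j i), α (i + k) = 2 * Real.pi)
    (hnext : ∀ i : ℤ, α (i + j i) = α i) :
    ∀ i : ℤ, j (i + 1) = j i := by
  intro i
  set S : ℕ → ℝ := fun n => ∑ k ∈ Finset.range n, α (i + 1 + k) with hS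
  have mono : StrictMono S := by
    apply strictMono_nat_of_lt_succ
    intro n
    simp only [hS, Finset.sum_range_succ]
    have := hpos (i + 1 + n)
    linarith
  have h1 : ∑ k ∈ Finset.range (j i + 1), α (i + k) = 2 * Real.pi + α i := by
    rw [Finset.sum_range_succ, hwin i, hnext i]
  have h2 : ∑ k ∈ Finset.range (j i + 1), α (i + k)
      = S (j i) + α i := by
    rw [Finset.sum_range_succ' (fun k => α (i + k)) (j i)]
    simp only [hS]
    congr 1
    · apply Finset.sum_congr rfl
      intro k _
      congr 1
      push_cast
      ring
    · norm_num
  have key : S (j i) = 2 * Real.pi := by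
    have := h1.symm.trans h2
    linarith
  have key2 : S (j (i + 1)) = 2 * Real.pi := hwin (i + 1)
  exact mono.injective (key2.trans key.symm)
end
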